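/- arXiv:0907.0523 — 2 statements merged into one kernel-verified Lean document; each statement's English description precedes it below -/
import Mathlib

section
/- For any real q ≥ 2 and complex numbers α₁, α₂, there exists a constant C depending only on q such that | |α₁|^{q-3} α₁² - |α₂|^{q-3} α₂² | ≤ C |α₁ - α₂| (|α₁| + |α₂|)^{q-2}, where |α|^{q-3} α² is interpreted as 0 when α = 0. -/
/-!
Write `‖α‖ ^ (q - 3) * α ^ 2 = ‖α‖ ^ (q - 1) * u ^ 2` with `u = α / ‖α‖`. For `‖α₂‖ ≤ ‖α₁‖` the
difference splits into a radial part `(‖α₁‖ ^ (q - 1) - ‖α₂‖ ^ (q - 1)) * u₁ ^ 2`, bounded by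
Bernoulli's inequality since `q - 1 ≥ 1`, and an angular part `‖α₂‖ ^ (q - 1) * (u₁ ^ 2 - u₂ ^ 2)`,
bounded because rescaling `α₁` to the sphere of radius `‖α₂‖` moves it by at most `‖α₁ - α₂‖`,
so `‖α₂‖ * ‖u₁ - u₂‖ ≤ 2 * ‖α₁ - α₂‖`. This gives `C = q + 3`.
-/

open Real

theorem Real.rpow_sub_rpow_le_mul_rpow_mul_sub {s a b : ℝ} (hs : 1 ≤ s) (hb : 0 ≤ b)
    (hba : b ≤ a) : a ^ s - b ^ s ≤ s * a ^ (s - 1) * (a - b) := by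
  rcases (hb.trans hba).eq_or_lt with rfl | ha
  · simp [le_antisymm hba hb]
  have bernoulli : 1 + s * (b / a - 1) ≤ b ^ s / a ^ s := by
    have := one_add_mul_self_le_rpow_one_add (s := b / a - 1) (by linarith [div_nonneg hb ha.le]) hs
    rwa [add_sub_cancel, div_rpow hb ha.le] at this
  have expand : a ^ s * (1 + s * (b / a - 1)) = a ^ s - s * a ^ (s - 1) * (a - b) := by
    rw [rpow_sub_one ha.ne']
    field_simp
    ring
  have := mul_le_mul_of_nonneg_left bernoulli (rpow_nonneg ha.le s)
  rw [expand, mul_div_cancel₀ _ (rpow_pos_of_pos ha s).ne'] at this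
  linarith

theorem NormedSpace.norm_normalize_le {V : Type*} [NormedAddCommGroup V] [NormedSpace ℝ V]
    (x : V) : ‖normalize x‖ ≤ 1 := by
  rcases eq_or_ne x 0 with rfl | hx
  · simp
  · simp [norm_normalize hx]

theorem NormedSpace.norm_mul_norm_normalize_sub_le {V : Type*} [NormedAddCommGroup V]
    [NormedSpace ℝ V] {x y : V} (h : ‖y‖ ≤ ‖x‖) :
    ‖y‖ * ‖normalize x - normalize y‖ ≤ 2 * ‖x - y‖ := by
  calc ‖y‖ * ‖normalize x - normalize y‖
      = ‖(‖y‖ - ‖x‖) • normalize x + (x - y)‖ := by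
        rw [← abs_norm y, ← Real.norm_eq_abs, ← norm_smul, smul_sub, norm_smul_normalize,
          sub_smul, norm_smul_normalize, norm_norm]
        congr 1; abel
    _ ≤ (‖x‖ - ‖y‖) * 1 + ‖x - y‖ := by
        grw [norm_add_le, norm_smul, norm_normalize_le, Real.norm_eq_abs, abs_sub_comm,
          abs_of_nonneg (sub_nonneg.2 h)]
    _ ≤ 2 * ‖x - y‖ := by linarith [norm_sub_norm_le x y]

variable {𝕜 : Type*} [RCLike 𝕜]

noncomputable def normRpowMulSq (q : ℝ) (x : 𝕜) : 𝕜 :=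
  if x = 0 then 0 else ((‖x‖ ^ (q - 3) : ℝ) : 𝕜) * x ^ 2

theorem normRpowMulSq_eq {q : ℝ} (hq : 1 < q) (x : 𝕜) :
    normRpowMulSq q x = ((‖x‖ ^ (q - 1) : ℝ) : 𝕜) * NormedSpace.normalize x ^ 2 := by
  rcases eq_or_ne x 0 with rfl | hx
  · simp [normRpowMulSq, zero_rpow (sub_pos.2 hq).ne']
  have hx' : 0 < ‖x‖ := norm_pos_iff.2 hx
  rw [normRpowMulSq, if_neg hx, NormedSpace.normalize, RCLike.real_smul_eq_coe_mul,
    show q - 1 = q - 3 + 2 by ring, rpow_add hx', rpow_two]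
  have : (‖x‖ : 𝕜) ≠ 0 := by exact_mod_cast hx'.ne'
  push_cast
  field_simp

theorem rpow_mul_norm_normalize_sq_sub_le {q : ℝ} (hq : 2 ≤ q) {x y : 𝕜} (h : ‖y‖ ≤ ‖x‖) :
    ‖y‖ ^ (q - 1) * ‖NormedSpace.normalize x ^ 2 - NormedSpace.normalize y ^ 2‖
      ≤ 4 * (‖x‖ + ‖y‖) ^ (q - 2) * ‖x - y‖ := by
  have hsum : ‖NormedSpace.normalize x + NormedSpace.normalize y‖ ≤ 2 :=
    calc _ ≤ 1 + 1 := (norm_add_le _ _).trans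
          (add_le_add (NormedSpace.norm_normalize_le x) (NormedSpace.norm_normalize_le y))
      _ = 2 := one_add_one_eq_two
  calc ‖y‖ ^ (q - 1) * ‖NormedSpace.normalize x ^ 2 - NormedSpace.normalize y ^ 2‖
      ≤ ‖y‖ ^ (q - 2) * ‖y‖ * (2 * ‖NormedSpace.normalize x - NormedSpace.normalize y‖) := by
        rw [show q - 1 = q - 2 + 1 by ring, rpow_add' (norm_nonneg y) (by linarith), rpow_one,
          sq_sub_sq, norm_mul]
        gcongr
    _ = 2 * ‖y‖ ^ (q - 2) * (‖y‖ * ‖NormedSpace.normalize x - NormedSpace.normalize y‖) := by ring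
    _ ≤ 2 * (‖x‖ + ‖y‖) ^ (q - 2) * (2 * ‖x - y‖) := by
        gcongr 2 * ?_ * ?_
        · exact rpow_le_rpow (norm_nonneg y) (le_add_of_nonneg_left (norm_nonneg x)) (by linarith)
        · exact NormedSpace.norm_mul_norm_normalize_sub_le h
    _ = 4 * (‖x‖ + ‖y‖) ^ (q - 2) * ‖x - y‖ := by ring

theorem norm_normRpowMulSq_sub_le_of_norm_le {q : ℝ} (hq : 2 ≤ q) {x y : 𝕜} (h : ‖y‖ ≤ ‖x‖) :
    ‖normRpowMulSq q x - normRpowMulSq q y‖ ≤ (q + 3) * ‖x - y‖ * (‖x‖ + ‖y‖) ^ (q - 2) := by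
  rw [normRpowMulSq_eq (by linarith), normRpowMulSq_eq (by linarith)]
  have hxy : ‖x‖ - ‖y‖ ≤ ‖x - y‖ := norm_sub_norm_le x y
  set a := ‖x‖
  set b := ‖y‖
  set u := NormedSpace.normalize x
  set v := NormedSpace.normalize y
  have hb : 0 ≤ b := norm_nonneg y
  have radial : ‖((a ^ (q - 1) - b ^ (q - 1) : ℝ) : 𝕜) * u ^ 2‖
      ≤ (q - 1) * (a + b) ^ (q - 2) * ‖x - y‖ :=
    calc ‖((a ^ (q - 1) - b ^ (q - 1) : ℝ) : 𝕜) * u ^ 2‖ ≤ a ^ (q - 1) - b ^ (q - 1) := by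
          have hmono : b ^ (q - 1) ≤ a ^ (q - 1) := by gcongr; linarith
          rw [norm_mul, norm_pow, RCLike.norm_ofReal, abs_of_nonneg (sub_nonneg.2 hmono)]
          exact mul_le_of_le_one_right (sub_nonneg.2 hmono)
            (pow_le_one₀ (norm_nonneg _) (NormedSpace.norm_normalize_le x))
      _ ≤ (q - 1) * a ^ (q - 1 - 1) * (a - b) :=
          Real.rpow_sub_rpow_le_mul_rpow_mul_sub (by linarith) hb h
      _ ≤ (q - 1) * (a + b) ^ (q - 2) * ‖x - y‖ := by
          have hpow : a ^ (q - 2) ≤ (a + b) ^ (q - 2) :=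
            rpow_le_rpow (norm_nonneg x) (le_add_of_nonneg_right hb) (by linarith)
          have hq1 : 0 ≤ q - 1 := by linarith
          rw [show q - 1 - 1 = q - 2 by ring]
          exact mul_le_mul (mul_le_mul_of_nonneg_left hpow hq1) hxy (sub_nonneg.2 h)
            (mul_nonneg hq1 (by positivity))
  have angular :
      ‖((b ^ (q - 1) : ℝ) : 𝕜) * (u ^ 2 - v ^ 2)‖ ≤ 4 * (a + b) ^ (q - 2) * ‖x - y‖ := by
    rw [norm_mul, RCLike.norm_ofReal, abs_of_nonneg (by positivity)]
    exact rpow_mul_norm_normalize_sq_sub_le hq h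
  calc ‖((a ^ (q - 1) : ℝ) : 𝕜) * u ^ 2 - ((b ^ (q - 1) : ℝ) : 𝕜) * v ^ 2‖
      = ‖((a ^ (q - 1) - b ^ (q - 1) : ℝ) : 𝕜) * u ^ 2
          + ((b ^ (q - 1) : ℝ) : 𝕜) * (u ^ 2 - v ^ 2)‖ := by
        congr 1; push_cast; ring
    _ ≤ (q - 1) * (a + b) ^ (q - 2) * ‖x - y‖ + 4 * (a + b) ^ (q - 2) * ‖x - y‖ :=
        norm_add_le_of_le radial angular
    _ = (q + 3) * ‖x - y‖ * (a + b) ^ (q - 2) := by ring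

theorem norm_normRpowMulSq_sub_le {q : ℝ} (hq : 2 ≤ q) (x y : 𝕜) :
    ‖normRpowMulSq q x - normRpowMulSq q y‖ ≤ (q + 3) * ‖x - y‖ * (‖x‖ + ‖y‖) ^ (q - 2) := by
  rcases le_total ‖y‖ ‖x‖ with h | h
  · exact norm_normRpowMulSq_sub_le_of_norm_le hq h
  · rw [norm_sub_rev, norm_sub_rev x, add_comm ‖x‖]
    exact norm_normRpowMulSq_sub_le_of_norm_le hq h

theorem stmt_1 (q : ℝ) (hq : 2 ≤ q) :
    ∃ C : ℝ, 0 < C ∧ ∀ α₁ α₂ : ℂ,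
      ‖
          ((if α₁ = 0 then 0 else ((‖α₁‖ ^ (q - 3) : ℝ) : ℂ) * α₁ ^ 2) -
           (if α₂ = 0 then 0 else ((‖α₂‖ ^ (q - 3) : ℝ) : ℂ) * α₂ ^ 2))‖ ≤
        C * ‖α₁ - α₂‖ * (‖α₁‖ + ‖α₂‖) ^ (q - 2) :=
  -- the left-hand side is `normRpowMulSq q` at `𝕜 = ℂ`, unfolded
  ⟨q + 3, by linarith, norm_normRpowMulSq_sub_le hq⟩
end

section
/- Let p > 1, λ ∈ ℂ with Im λ < 0, and let V : [0,∞) → ℂ solve i V'(s) = λ |V(s)|^{p-1} V(s). Then for all s ≥ 0, |V(s)| ≤ |V(0)| (1 - (p-1)(Im λ)|V(0)|^{p-1} s)^{-1/(p-1)}; in particular |V(s)| ≤ C (1 + s|Im λ|)^{-1/(p-1)} for a constant C depending on p and |V(0)|. -/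
/-!
Along a solution, `d/ds |V|² = 2 (Im λ) |V|^(p-1) |V|² ≤ 0`, so `|V|` is nonincreasing and a zero
of `V` forces `V s = 0` from then on. On an interval where `V` does not vanish, `|V|^(-(p-1))` has
the constant derivative `-(p-1) Im λ`, so it is affine, and solving for `|V s|` gives the first
bound as an equality. The second follows from `1 + x ≤ max 1 c⁻¹ * (1 + c x)`.
-/

open Complex Set

/-- `i V' = λ |V|^q V` on `[0, ∞)`, where `q = p - 1`. -/
def SolvesPowerODE (q : ℝ) (lam : ℂ) (V : ℝ → ℂ) : Prop :=
  ∀ s, 0 ≤ s → HasDerivAt V (-I * (lam * ((‖V s‖ ^ q : ℝ) : ℂ) * V s)) s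

lemma inner_neg_I_mul_mul_self (lam z : ℂ) (c : ℝ) :
    inner ℝ z (-I * (lam * c * z)) = lam.im * c * ‖z‖ ^ 2 := by
  rw [Complex.inner, ← Complex.normSq_eq_norm_sq, Complex.normSq_apply]
  simp only [mul_re, mul_im, neg_re, neg_im, I_re, I_im, ofReal_re, ofReal_im, conj_re, conj_im]
  ring

lemma Real.eq_mul_rpow_of_rpow_neg_eq {x a q B : ℝ} (hx : 0 ≤ x) (ha : 0 ≤ a) (hB : 0 ≤ B)
    (hq : q ≠ 0) (h : x ^ (-q) = a ^ (-q) * B) : x = a * B ^ (-1 / q) := by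
  have hinv : ∀ y : ℝ, 0 ≤ y → (y ^ (-q)) ^ (-1 / q) = y := fun y hy => by
    rw [← Real.rpow_mul hy, show -q * (-1 / q) = 1 by field_simp, Real.rpow_one]
  rw [← hinv x hx, h, Real.mul_rpow (Real.rpow_nonneg ha _) hB, hinv a ha]

lemma Real.one_add_mul_rpow_neg_le {c x e : ℝ} (hc : 0 < c) (hx : 0 ≤ x) (he : 0 ≤ e) :
    (1 + c * x) ^ (-e) ≤ max 1 c⁻¹ ^ e * (1 + x) ^ (-e) := by
  set K := max 1 c⁻¹
  have hK : 0 < K := lt_of_lt_of_le one_pos (le_max_left _ _)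
  have hcx : 0 < 1 + c * x := by positivity
  have hlin : 1 + x ≤ K * (1 + c * x) := by
    have h1 : 1 ≤ K := le_max_left _ _
    have h2 : x ≤ K * (c * x) := by
      calc x = c⁻¹ * (c * x) := by field_simp
        _ ≤ K * (c * x) := by gcongr; exact le_max_right _ _
    nlinarith
  have key := Real.rpow_le_rpow_of_nonpos (by positivity) hlin (neg_nonpos.2 he)
  rw [Real.mul_rpow hK.le hcx.le, Real.rpow_neg hK.le] at key
  calc (1 + c * x) ^ (-e) = K ^ e * ((K ^ e)⁻¹ * (1 + c * x) ^ (-e)) := by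
        field_simp
    _ ≤ K ^ e * (1 + x) ^ (-e) := by gcongr

namespace SolvesPowerODE

variable {q : ℝ} {lam : ℂ} {V : ℝ → ℂ}

lemma hasDerivAt_norm_sq (hV : SolvesPowerODE q lam V) {s : ℝ} (hs : 0 ≤ s) :
    HasDerivAt (‖V ·‖ ^ 2) (2 * (lam.im * ‖V s‖ ^ q * ‖V s‖ ^ 2)) s := by
  simpa only [inner_neg_I_mul_mul_self] using (hV s hs).norm_sq

lemma antitoneOn_norm (hV : SolvesPowerODE q lam V) (hlam : lam.im ≤ 0) :
    AntitoneOn (‖V ·‖) (Ici 0) := by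
  have hsq : AntitoneOn (‖V ·‖ ^ 2) (Ici 0) := by
    refine antitoneOn_of_hasDerivWithinAt_nonpos (convex_Ici 0)
      (fun t ht => (hV.hasDerivAt_norm_sq ht).continuousAt.continuousWithinAt)
      (fun t ht => (hV.hasDerivAt_norm_sq (interior_subset ht : t ∈ Ici 0)).hasDerivWithinAt)
      (fun t _ => ?_)
    have : 0 ≤ ‖V t‖ ^ q * ‖V t‖ ^ 2 := by positivity
    nlinarith
  intro s hs t ht hst
  exact (pow_le_pow_iff_left₀ (norm_nonneg _) (norm_nonneg _) two_ne_zero).1 (hsq hs ht hst)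

lemma hasDerivAt_norm_rpow_neg (hV : SolvesPowerODE q lam V) {s : ℝ} (hs : 0 ≤ s)
    (h0 : V s ≠ 0) : HasDerivAt (‖V ·‖ ^ (-q)) (-q * lam.im) s := by
  have hn : 0 < ‖V s‖ := norm_pos_iff.2 h0
  have hfun : (‖V ·‖ ^ (-q)) = fun t => (‖V t‖ ^ 2) ^ (-q / 2) := by
    funext t
    rw [← Real.rpow_natCast, ← Real.rpow_mul (norm_nonneg _)]
    ring_nf
  rw [hfun]
  refine ((hV.hasDerivAt_norm_sq hs).rpow_const (Or.inl (by positivity))).congr_deriv ?_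
  rw [← Real.rpow_natCast, ← Real.rpow_mul hn.le]
  have hcancel : ‖V s‖ ^ q * ‖V s‖ ^ ((2 : ℕ) : ℝ) * ‖V s‖ ^ ((2 : ℕ) * (-q / 2 - 1)) = 1 := by
    rw [← Real.rpow_add hn, ← Real.rpow_add hn]
    ring_nf
    exact Real.rpow_zero _
  linear_combination (-q * lam.im) * hcancel

lemma norm_rpow_neg_eq (hV : SolvesPowerODE q lam V) {s : ℝ} (hs : 0 ≤ s)
    (h0 : ∀ t ∈ Icc 0 s, V t ≠ 0) :
    ‖V s‖ ^ (-q) = ‖V 0‖ ^ (-q) - q * lam.im * s := by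
  have hderiv : ∀ t ∈ Icc 0 s, HasDerivAt (‖V ·‖ ^ (-q)) (-q * lam.im) t :=
    fun t ht => hV.hasDerivAt_norm_rpow_neg ht.1 (h0 t ht)
  have haff : ∀ t : ℝ, HasDerivAt (fun t => ‖V 0‖ ^ (-q) - q * lam.im * t) (-q * lam.im) t :=
    fun t => by simpa using ((hasDerivAt_id t).const_mul (q * lam.im)).const_sub (‖V 0‖ ^ (-q))
  refine eq_of_has_deriv_right_eq (fun t ht => (hderiv t (Ico_subset_Icc_self ht)).hasDerivWithinAt)
    (fun t _ => (haff t).hasDerivWithinAt)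
    (fun t ht => (hderiv t ht).continuousAt.continuousWithinAt)
    (fun t _ => (haff t).continuousAt.continuousWithinAt) (by simp) s ⟨hs, le_rfl⟩

lemma norm_le (hV : SolvesPowerODE q lam V) (hq : 0 < q) (hlam : lam.im ≤ 0) {s : ℝ}
    (hs : 0 ≤ s) : ‖V s‖ ≤ ‖V 0‖ * (1 - q * lam.im * ‖V 0‖ ^ q * s) ^ (-1 / q) := by
  have hbase : 0 ≤ 1 - q * lam.im * ‖V 0‖ ^ q * s := by
    have : 0 ≤ q * -lam.im * ‖V 0‖ ^ q * s := by
      have := neg_nonneg.2 hlam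
      positivity
    linarith
  by_cases hzero : ∃ t ∈ Icc 0 s, V t = 0
  · obtain ⟨t, ht, hVt⟩ := hzero
    calc ‖V s‖ ≤ ‖V t‖ := hV.antitoneOn_norm hlam ht.1 hs ht.2
      _ = 0 := by simp [hVt]
      _ ≤ _ := by positivity
  · push Not at hzero
    have ha : 0 < ‖V 0‖ := norm_pos_iff.2 (hzero 0 ⟨le_rfl, hs⟩)
    refine le_of_eq (Real.eq_mul_rpow_of_rpow_neg_eq (norm_nonneg _) ha.le hbase hq.ne' ?_)
    rw [hV.norm_rpow_neg_eq hs hzero, mul_sub, mul_one, Real.rpow_neg ha.le]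
    field_simp

lemma exists_norm_le_mul_one_add_rpow (hV : SolvesPowerODE q lam V) (hq : 0 < q)
    (hlam : lam.im ≤ 0) :
    ∃ C : ℝ, 0 < C ∧ ∀ s : ℝ, 0 ≤ s → ‖V s‖ ≤ C * (1 + s * |lam.im|) ^ (-1 / q) := by
  rcases (norm_nonneg (V 0)).eq_or_lt with ha | ha
  · refine ⟨1, one_pos, fun s hs => ?_⟩
    have := hV.norm_le hq hlam hs
    rw [← ha, zero_mul] at this
    exact this.trans (by positivity)
  · set c := q * ‖V 0‖ ^ q
    have hc : 0 < c := by positivity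
    refine ⟨‖V 0‖ * max 1 c⁻¹ ^ (1 / q), by positivity, fun s hs => ?_⟩
    have hbase : 1 - q * lam.im * ‖V 0‖ ^ q * s = 1 + c * (s * |lam.im|) := by
      rw [abs_of_nonpos hlam]; ring
    calc ‖V s‖ ≤ ‖V 0‖ * (1 + c * (s * |lam.im|)) ^ (-(1 / q)) := by
          simpa only [hbase, neg_div] using hV.norm_le hq hlam hs
      _ ≤ ‖V 0‖ * (max 1 c⁻¹ ^ (1 / q) * (1 + s * |lam.im|) ^ (-(1 / q))) := by
          gcongr
          exact Real.one_add_mul_rpow_neg_le hc (by positivity) (by positivity)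
      _ = _ := by rw [neg_div, mul_assoc]

end SolvesPowerODE

theorem stmt_10 (p : ℝ) (lam : ℂ) (V : ℝ → ℂ)
    (hp : 1 < p) (hlam : lam.im < 0)
    (hODE : ∀ s : ℝ, 0 ≤ s →
      HasDerivAt V (-Complex.I * (lam * ((‖V s‖ ^ (p - 1) : ℝ) : ℂ) * V s)) s) :
    (∀ s : ℝ, 0 ≤ s →
      ‖V s‖ ≤
        ‖V 0‖ *
          (1 - (p - 1) * lam.im * ‖V 0‖ ^ (p - 1) * s) ^ (-1 / (p - 1))) ∧
    ∃ C : ℝ, 0 < C ∧ ∀ s : ℝ, 0 ≤ s →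
      ‖V s‖ ≤ C * (1 + s * |lam.im|) ^ (-1 / (p - 1)) := by
  have hV : SolvesPowerODE (p - 1) lam V := hODE
  have hq : 0 < p - 1 := sub_pos.2 hp
  exact ⟨fun s hs => hV.norm_le hq hlam.le hs, hV.exists_norm_le_mul_one_add_rpow hq hlam.le⟩
end
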